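/- ⟨η₁| z^h (a⁻)^j k^m w^h |η₂⟩ = z^{-j} Σ_{i=0}^{j} (-1)^i q^{i(i+1-2j)/2} · binom(j,i)_q · (-q^{2i+2m+1} z²w²; q²)_∞ / (q^{2i+2m} z²w²; q²)_∞, where binom(j,i)_q is the q-binomial coefficient (q;q)_j / ((q;q)_{j-i}(q;q)_i). -/

import Mathlib

open Complex

noncomputable section

/-- `a⁻|m⟩ = (1-q^{2m})|m-1⟩`. -/
def aM (q : ℂ) : (ℕ → ℂ) → (ℕ → ℂ) := fun f n => (1 - q ^ (2 * (n + 1))) * f (n + 1)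

/-- `k|m⟩ = q^m|m⟩`. -/
def kk (q : ℂ) : (ℕ → ℂ) → (ℕ → ℂ) := fun f n => q ^ n * f n

/-- `z^h|m⟩ = z^m|m⟩`. -/
def zh (z : ℂ) : (ℕ → ℂ) → (ℕ → ℂ) := fun f n => z ^ n * f n

/-- `qpoch x m = ∏_{j=1}^m (1 - x^j)`. -/
def qpoch (x : ℂ) (m : ℕ) : ℂ := ∏ j ∈ Finset.range m, (1 - x ^ (j + 1))

/-- infinite q-Pochhammer symbol `(x;q)_∞ = ∏_{i≥0} (1 - x q^i)`. -/
def qpochInf (x q : ℂ) : ℂ := ∏' i : ℕ, (1 - x * q ^ i)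

/-- coefficients of `⟨η₁| = Σ_{m≥0}⟨m|/(q;q)_m`. -/
def eta1 (q : ℂ) : ℕ → ℂ := fun m => (qpoch q m)⁻¹

/-- coefficients of `|η₂⟩ = Σ_{m≥0}|2m⟩/(q⁴;q⁴)_m`. -/
def eta2 (q : ℂ) : ℕ → ℂ := fun m => if Even m then (qpoch (q ^ 4) (m / 2))⁻¹ else 0

/-- q-binomial coefficient `binom(j,i)_q = (q;q)_j / ((q;q)_{j-i}(q;q)_i)`. -/
def qbinom (q : ℂ) (j i : ℕ) : ℂ := qpoch q j / (qpoch q (j - i) * qpoch q i)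

/-!
Put `n = l + j`. Since `eta1 q l * (q²;q²)_l = (-q;q)_l`, the `l`-th term of the pairing is
`z^{-j} ∏_{t<j} (1 - q^{n-t}) (-q;q)_n (q^m z w)^n η₂(n)`, and this expression vanishes for
`n < j`, so the sum may be taken over all `n`. Expanding the finite product by the Cauchy
q-binomial theorem turns it into `j + 1` pairings `⟨η₁| x^h |η₂⟩` with `x = q^{i+m} z w`.
Only even `n` contribute to these, and on them one gets the q-binomial series
`Σ_k (a;p)_k / (p;p)_k t^k` with `a = -q`, `p = q²`, `t = x²`, whose sum `(at;p)_∞ / (t;p)_∞`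
follows from the functional equation `(1 - t) f(t) = (1 - at) f(pt)`, iterated and passed to
the limit.
-/

open Finset Filter Topology

def qPoch (a p : ℂ) (n : ℕ) : ℂ := ∏ k ∈ range n, (1 - a * p ^ k)

@[simp]
lemma qPoch_zero (a p : ℂ) : qPoch a p 0 = 1 := prod_range_zero _

lemma qPoch_succ (a p : ℂ) (n : ℕ) : qPoch a p (n + 1) = qPoch a p n * (1 - a * p ^ n) :=
  prod_range_succ _ _

lemma qPoch_add (a p : ℂ) (l j : ℕ) :
    qPoch a p (l + j) = qPoch a p l * ∏ t ∈ range j, (1 - a * p ^ (l + t)) :=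
  prod_range_add _ _ _

@[simp]
lemma qpoch_zero (x : ℂ) : qpoch x 0 = 1 := prod_range_zero _

lemma qpoch_succ (x : ℂ) (n : ℕ) : qpoch x (n + 1) = qpoch x n * (1 - x ^ (n + 1)) :=
  prod_range_succ _ _

lemma qpoch_eq_qPoch (x : ℂ) (n : ℕ) : qpoch x n = qPoch x x n :=
  prod_congr rfl fun k _ => by rw [pow_succ']

lemma mul_pow_ne_one {x p : ℂ} (hx : ‖x‖ < 1) (hp : ‖p‖ ≤ 1) (k : ℕ) : x * p ^ k ≠ 1 := by
  intro h
  have : ‖x * p ^ k‖ < 1 := by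
    rw [norm_mul, norm_pow]
    exact (mul_le_of_le_one_right (norm_nonneg x) (pow_le_one₀ (norm_nonneg p) hp)).trans_lt hx
  simp [h] at this

lemma qPoch_ne_zero {a p : ℂ} (h : ∀ k, a * p ^ k ≠ 1) (n : ℕ) : qPoch a p n ≠ 0 :=
  prod_ne_zero_iff.2 fun k _ => sub_ne_zero.2 (h k).symm

lemma self_mul_pow_ne_one {p : ℂ} (hp : ‖p‖ < 1) (k : ℕ) : p * p ^ k ≠ 1 :=
  mul_pow_ne_one hp hp.le k

lemma qpoch_ne_zero {q : ℂ} (hq : ‖q‖ < 1) (n : ℕ) : qpoch q n ≠ 0 := by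
  rw [qpoch_eq_qPoch]
  exact qPoch_ne_zero (self_mul_pow_ne_one hq) n

lemma summable_norm_neg_mul_pow (x : ℂ) {p : ℂ} (hp : ‖p‖ < 1) :
    Summable fun k : ℕ => ‖-(x * p ^ k)‖ := by
  simpa [norm_mul, norm_pow] using
    (summable_geometric_of_lt_one (norm_nonneg p) hp).mul_left ‖x‖

lemma hasProd_qpochInf (x : ℂ) {p : ℂ} (hp : ‖p‖ < 1) :
    HasProd (fun k : ℕ => 1 - x * p ^ k) (qpochInf x p) := by
  have h := (multipliable_one_add_of_summable (summable_norm_neg_mul_pow x hp)).hasProd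
  simp only [← sub_eq_add_neg] at h
  exact h

lemma tendsto_qPoch (x : ℂ) {p : ℂ} (hp : ‖p‖ < 1) :
    Tendsto (qPoch x p) atTop (𝓝 (qpochInf x p)) :=
  (hasProd_qpochInf x hp).tendsto_prod_nat

lemma qpochInf_ne_zero {x p : ℂ} (h : ∀ k, x * p ^ k ≠ 1) (hp : ‖p‖ < 1) :
    qpochInf x p ≠ 0 := by
  simpa [qpochInf, sub_eq_add_neg] using tprod_one_add_ne_zero_of_summable
    (fun k => by simpa [← sub_eq_add_neg, sub_eq_zero] using (h k).symm)
    (summable_norm_neg_mul_pow x hp)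

section QBinomialTheorem

variable {p : ℂ}

def qbinomSeries (a p s : ℂ) : ℂ := ∑' n : ℕ, qPoch a p n / qPoch p p n * s ^ n

lemma exists_norm_qbinomSeries_term_le (a : ℂ) (hp : ‖p‖ < 1) :
    ∃ C, ∀ (s : ℂ) (n : ℕ), ‖qPoch a p n / qPoch p p n * s ^ n‖ ≤ C * ‖s‖ ^ n := by
  -- the coefficients converge to `(a;p)_∞ / (p;p)_∞`, hence are bounded
  have hlim := (tendsto_qPoch a hp).div (tendsto_qPoch p hp)
    (qpochInf_ne_zero (self_mul_pow_ne_one hp) hp)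
  obtain ⟨C, hC⟩ := isBounded_iff_forall_norm_le.1 (Metric.isBounded_range_of_tendsto _ hlim)
  refine ⟨C, fun s n => ?_⟩
  rw [norm_mul, norm_pow]
  exact mul_le_mul_of_nonneg_right (hC _ ⟨n, rfl⟩) (by positivity)

lemma summable_qbinomSeries (a : ℂ) (hp : ‖p‖ < 1) {s : ℂ} (hs : ‖s‖ < 1) :
    Summable fun n : ℕ => qPoch a p n / qPoch p p n * s ^ n := by
  obtain ⟨C, hC⟩ := exists_norm_qbinomSeries_term_le a hp
  exact .of_norm_bounded ((summable_geometric_of_lt_one (norm_nonneg s) hs).mul_left C) (hC s)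

lemma qPoch_div_qPoch_succ (a : ℂ) (hp : ‖p‖ < 1) (n : ℕ) :
    qPoch a p (n + 1) / qPoch p p (n + 1) * (1 - p * p ^ n) =
      qPoch a p n / qPoch p p n * (1 - a * p ^ n) := by
  have h₁ := qPoch_ne_zero (self_mul_pow_ne_one hp) n
  have h₂ : 1 - p * p ^ n ≠ 0 := sub_ne_zero.2 (self_mul_pow_ne_one hp n).symm
  rw [qPoch_succ, qPoch_succ, ← div_mul_div_comm, mul_assoc, div_mul_cancel₀ _ h₂]

lemma one_sub_mul_qbinomSeries (a : ℂ) (hp : ‖p‖ < 1) {s : ℂ} (hs : ‖s‖ < 1) :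
    (1 - s) * qbinomSeries a p s = (1 - a * s) * qbinomSeries a p (p * s) := by
  have hps : ‖p * s‖ < 1 := by
    rw [norm_mul]; exact (mul_le_of_le_one_left (norm_nonneg s) hp.le).trans_lt hs
  have h₁ : HasSum _ (qbinomSeries a p s) := (summable_qbinomSeries a hp hs).hasSum
  have h₂ : HasSum _ (qbinomSeries a p (p * s)) := (summable_qbinomSeries a hp hps).hasSum
  have hdiff := (hasSum_nat_add_iff' 1).2 (h₁.sub h₂)
  have hshift : HasSum (fun n => qPoch a p (n + 1) / qPoch p p (n + 1) * s ^ (n + 1) -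
      qPoch a p (n + 1) / qPoch p p (n + 1) * (p * s) ^ (n + 1))
      (s * qbinomSeries a p s - a * s * qbinomSeries a p (p * s)) := by
    refine ((h₁.mul_left s).sub (h₂.mul_left (a * s))).congr_fun fun n => ?_
    linear_combination (s ^ (n + 1)) * qPoch_div_qPoch_succ a hp n
  simp only [range_one, sum_singleton, pow_zero, sub_self, sub_zero] at hdiff
  linear_combination hdiff.unique hshift

lemma qPoch_mul_qbinomSeries (a : ℂ) (hp : ‖p‖ < 1) {t : ℂ} (ht : ‖t‖ < 1) (N : ℕ) :
    qPoch t p N * qbinomSeries a p t = qPoch (a * t) p N * qbinomSeries a p (p ^ N * t) := by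
  induction N with
  | zero => simp
  | succ N ih =>
    have hN : ‖p ^ N * t‖ < 1 := by
      rw [norm_mul, norm_pow]
      exact (mul_le_of_le_one_left (norm_nonneg t) (pow_le_one₀ (norm_nonneg p) hp.le)).trans_lt ht
    have h := one_sub_mul_qbinomSeries a hp hN
    rw [show p * (p ^ N * t) = p ^ (N + 1) * t by ring] at h
    rw [qPoch_succ, qPoch_succ]
    linear_combination (1 - t * p ^ N) * ih + qPoch (a * t) p N * h

lemma tendsto_qbinomSeries_pow_mul (a : ℂ) (hp : ‖p‖ < 1) {t : ℂ} (ht : ‖t‖ < 1) :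
    Tendsto (fun N : ℕ => qbinomSeries a p (p ^ N * t)) atTop (𝓝 1) := by
  obtain ⟨C, hC⟩ := exists_norm_qbinomSeries_term_le a hp
  have hpt : Tendsto (fun N : ℕ => p ^ N * t) atTop (𝓝 0) := by
    simpa using (tendsto_pow_atTop_nhds_zero_of_norm_lt_one hp).mul_const t
  have hC₀ : 0 ≤ C := by simpa using (norm_nonneg _).trans (hC 0 0)
  have hbound (N n : ℕ) : ‖qPoch a p n / qPoch p p n * (p ^ N * t) ^ n‖ ≤ C * ‖t‖ ^ n := by
    refine (hC _ n).trans (mul_le_mul_of_nonneg_left (pow_le_pow_left₀ (norm_nonneg _) ?_ n) hC₀)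
    rw [norm_mul, norm_pow]
    exact mul_le_of_le_one_left (norm_nonneg t) (pow_le_one₀ (norm_nonneg p) hp.le)
  have hlim := tendsto_tsum_of_dominated_convergence
    ((summable_geometric_of_lt_one (norm_nonneg t) ht).mul_left C)
    (fun n => (hpt.pow n).const_mul (qPoch a p n / qPoch p p n)) (.of_forall hbound)
  rw [tsum_eq_single 0 fun n hn => by simp [hn]] at hlim
  simp only [pow_zero, qPoch_zero, div_one, mul_one] at hlim
  exact hlim

theorem hasSum_qbinomSeries (a : ℂ) (hp : ‖p‖ < 1) {t : ℂ} (ht : ‖t‖ < 1) :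
    HasSum (fun n : ℕ => qPoch a p n / qPoch p p n * t ^ n)
      (qpochInf (a * t) p / qpochInf t p) := by
  convert (summable_qbinomSeries a hp ht).hasSum
  change _ = qbinomSeries a p t
  rw [div_eq_iff (qpochInf_ne_zero (mul_pow_ne_one ht hp.le) hp), mul_comm (qbinomSeries a p t)]
  refine tendsto_nhds_unique ?_ ((tendsto_qPoch t hp).mul_const _)
  simpa using ((tendsto_qPoch (a * t) hp).mul (tendsto_qbinomSeries_pow_mul a hp ht)).congr
    fun N => (qPoch_mul_qbinomSeries a hp ht N).symm

end QBinomialTheorem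

section GaussBinomial

variable {q : ℂ}

lemma qbinom_zero_right (hq : ∀ n, qpoch q n ≠ 0) (j : ℕ) : qbinom q j 0 = 1 := by
  simp [qbinom, hq j]

lemma qbinom_self (hq : ∀ n, qpoch q n ≠ 0) (j : ℕ) : qbinom q j j = 1 := by
  simp [qbinom, hq j]

lemma qbinom_succ_succ (hq : ∀ n, qpoch q n ≠ 0) {i j : ℕ} (hij : i < j) :
    qbinom q (j + 1) (i + 1) = qbinom q j (i + 1) + q ^ (j - i) * qbinom q j i := by
  obtain ⟨d, rfl⟩ := Nat.exists_eq_add_of_lt hij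
  simp only [qbinom, show i + d + 1 + 1 - (i + 1) = d + 1 by omega,
    show i + d + 1 - (i + 1) = d by omega, show i + d + 1 - i = d + 1 by omega]
  have := hq (i + d + 1)
  obtain ⟨_, _⟩ := mul_ne_zero_iff.1 (qpoch_succ q d ▸ hq (d + 1))
  obtain ⟨_, _⟩ := mul_ne_zero_iff.1 (qpoch_succ q i ▸ hq (i + 1))
  rw [qpoch_succ q (i + d + 1), qpoch_succ q d, qpoch_succ q i]
  field_simp
  ring

lemma pow_choose_two_mul_qbinom_succ_succ (hq : ∀ n, qpoch q n ≠ 0) {i j : ℕ} (hij : i < j) :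
    q ^ (i + 1).choose 2 * qbinom q (j + 1) (i + 1) =
      q ^ (i + 1).choose 2 * qbinom q j (i + 1) + q ^ j * (q ^ i.choose 2 * qbinom q j i) := by
  rw [qbinom_succ_succ hq hij, Nat.choose_succ_succ', Nat.choose_one_right,
    show j = i + (j - i) by omega]
  simp only [pow_add, add_tsub_cancel_left]
  ring

lemma pow_choose_two_mul_qbinom_succ_self (hq : ∀ n, qpoch q n ≠ 0) (j : ℕ) :
    q ^ (j + 1).choose 2 * qbinom q (j + 1) (j + 1) = q ^ j * (q ^ j.choose 2 * qbinom q j j) := by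
  rw [qbinom_self hq, qbinom_self hq, Nat.choose_succ_succ', Nat.choose_one_right, pow_add]
  ring

theorem prod_one_add_pow_mul (hq : ∀ n, qpoch q n ≠ 0) (j : ℕ) (y : ℂ) :
    ∏ t ∈ range j, (1 + q ^ t * y) =
      ∑ i ∈ range (j + 1), q ^ i.choose 2 * qbinom q j i * y ^ i := by
  induction j with
  | zero => simp [qbinom_zero_right hq]
  | succ j ih =>
    have hpascal : ∀ i ∈ range j, q ^ (i + 1).choose 2 * qbinom q (j + 1) (i + 1) * y ^ (i + 1) =
        q ^ (i + 1).choose 2 * qbinom q j (i + 1) * y ^ (i + 1) +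
          q ^ j * (q ^ i.choose 2 * qbinom q j i * y ^ (i + 1)) := fun i hi => by
      rw [pow_choose_two_mul_qbinom_succ_succ hq (mem_range.1 hi)]
      ring
    have hL : (∑ i ∈ range (j + 1), q ^ i.choose 2 * qbinom q j i * y ^ i) * (1 + q ^ j * y) =
        ∑ i ∈ range j, q ^ (i + 1).choose 2 * qbinom q j (i + 1) * y ^ (i + 1) + 1 +
          q ^ j * (∑ i ∈ range j, q ^ i.choose 2 * qbinom q j i * y ^ (i + 1) +
            q ^ j.choose 2 * qbinom q j j * y ^ (j + 1)) := by
      have h₀ : ∑ i ∈ range (j + 1), q ^ i.choose 2 * qbinom q j i * y ^ i =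
          ∑ i ∈ range j, q ^ (i + 1).choose 2 * qbinom q j (i + 1) * y ^ (i + 1) + 1 := by
        rw [sum_range_succ', qbinom_zero_right hq]
        simp
      have h₁ : (∑ i ∈ range (j + 1), q ^ i.choose 2 * qbinom q j i * y ^ i) * (q ^ j * y) =
          q ^ j * (∑ i ∈ range j, q ^ i.choose 2 * qbinom q j i * y ^ (i + 1) +
            q ^ j.choose 2 * qbinom q j j * y ^ (j + 1)) := by
        rw [← sum_range_succ (fun i => q ^ i.choose 2 * qbinom q j i * y ^ (i + 1)), sum_mul,
          mul_sum]
        exact sum_congr rfl fun i _ => by ring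
      rw [mul_add, mul_one, h₁, h₀]
    have hR : ∑ i ∈ range (j + 1 + 1), q ^ i.choose 2 * qbinom q (j + 1) i * y ^ i =
        ∑ i ∈ range j, q ^ (i + 1).choose 2 * qbinom q (j + 1) (i + 1) * y ^ (i + 1) +
          q ^ (j + 1).choose 2 * qbinom q (j + 1) (j + 1) * y ^ (j + 1) + 1 := by
      rw [sum_range_succ', sum_range_succ, qbinom_zero_right hq]
      simp
    rw [prod_range_succ, ih, hL, hR, sum_congr rfl hpascal, sum_add_distrib, ← mul_sum,
      pow_choose_two_mul_qbinom_succ_self hq]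
    ring

lemma intCast_mul_succ_div_two (i : ℕ) : ((i : ℤ) * (i + 1)) / 2 = i.choose 2 + i := by
  have h : (i + 1).choose 2 = i.choose 2 + i := by
    rw [Nat.choose_succ_succ', Nat.choose_one_right, add_comm]
  rw [Nat.choose_two_right, Nat.add_sub_cancel] at h
  rw [mul_comm]
  exact_mod_cast h

theorem prod_one_sub_zpow_neg_mul (hq₀ : q ≠ 0) (hq : ∀ n, qpoch q n ≠ 0) (j : ℕ) (x : ℂ) :
    ∏ t ∈ range j, (1 - q ^ (-(t : ℤ)) * x) = ∑ i ∈ range (j + 1),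
      (-1 : ℂ) ^ i * q ^ (((i : ℤ) * (i + 1)) / 2 - (i : ℤ) * j) * qbinom q j i * x ^ i := by
  have hreflect : ∏ t ∈ range j, (1 - q ^ (-(t : ℤ)) * x) =
      ∏ t ∈ range j, (1 + q ^ t * (-(q ^ (1 - (j : ℤ)) * x))) := by
    rw [← prod_range_reflect]
    refine prod_congr rfl fun t ht => ?_
    have := mem_range.1 ht
    rw [show -(((j - 1 - t : ℕ)) : ℤ) = t + (1 - j) by omega, zpow_add₀ hq₀, zpow_natCast]
    ring
  rw [hreflect, prod_one_add_pow_mul hq]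
  refine sum_congr rfl fun i _ => ?_
  rw [intCast_mul_succ_div_two,
    show (i.choose 2 : ℤ) + i - i * j = i.choose 2 + (1 - j) * i by ring,
    zpow_add₀ hq₀, zpow_mul, zpow_natCast, zpow_natCast]
  ring

end GaussBinomial

lemma kk_iterate_apply (q : ℂ) (m : ℕ) (f : ℕ → ℂ) (n : ℕ) :
    (kk q)^[m] f n = q ^ (m * n) * f n := by
  induction m with
  | zero => simp
  | succ m ih =>
    rw [Function.iterate_succ_apply', kk, ih, ← mul_assoc, ← pow_add]
    ring_nf

lemma aM_iterate_apply (q : ℂ) (j : ℕ) (f : ℕ → ℂ) (n : ℕ) :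
    (aM q)^[j] f n = (∏ t ∈ range j, (1 - q ^ (2 * (n + t + 1)))) * f (n + j) := by
  induction j generalizing f with
  | zero => simp
  | succ j ih =>
    rw [Function.iterate_succ_apply, ih, aM, prod_range_succ, ← add_assoc]
    ring

section EtaPairing

variable {q : ℂ}

lemma qpoch_sq (q : ℂ) (n : ℕ) : qpoch (q ^ 2) n = qPoch q q n * qPoch (-q) q n := by
  induction n with
  | zero => simp
  | succ n ih =>
    rw [qpoch_succ, qPoch_succ, qPoch_succ, ih]
    ring

lemma eta1_mul_qpoch_sq (hq : ‖q‖ < 1) (n : ℕ) : eta1 q n * qpoch (q ^ 2) n = qPoch (-q) q n := by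
  have := qpoch_ne_zero hq n
  rw [eta1, qpoch_sq, ← qpoch_eq_qPoch]
  field_simp

lemma qPoch_neg_two_mul (q : ℂ) (k : ℕ) :
    qPoch (-q) q (2 * k) = qPoch (-q) (q ^ 2) k * qPoch (-q ^ 2) (q ^ 2) k := by
  induction k with
  | zero => simp
  | succ k ih =>
    rw [show 2 * (k + 1) = 2 * k + 1 + 1 by ring, qPoch_succ, qPoch_succ, ih, qPoch_succ,
      qPoch_succ]
    ring

lemma qpoch_pow_four (q : ℂ) (k : ℕ) :
    qpoch (q ^ 4) k = qPoch (q ^ 2) (q ^ 2) k * qPoch (-q ^ 2) (q ^ 2) k := by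
  induction k with
  | zero => simp
  | succ k ih =>
    rw [qpoch_succ, qPoch_succ, qPoch_succ, ih]
    ring

theorem hasSum_eta_pairing (hq : ‖q‖ < 1) {x : ℂ} (hx : ‖x‖ < 1) :
    HasSum (fun n => qPoch (-q) q n * (x ^ n * eta2 q n))
      (qpochInf (-q * x ^ 2) (q ^ 2) / qpochInf (x ^ 2) (q ^ 2)) := by
  have hq₂ : ‖q ^ 2‖ < 1 := by rw [norm_pow]; exact pow_lt_one₀ (norm_nonneg q) hq two_ne_zero
  have hx₂ : ‖x ^ 2‖ < 1 := by rw [norm_pow]; exact pow_lt_one₀ (norm_nonneg x) hx two_ne_zero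
  -- only even indices contribute, and there the series is the q-binomial series in `x²` over `q²`
  rw [← (mul_right_injective₀ (two_ne_zero' ℕ)).hasSum_iff]
  · refine (hasSum_qbinomSeries (-q) hq₂ hx₂).congr_fun fun k => ?_
    have h₁ := qPoch_ne_zero (self_mul_pow_ne_one hq₂) k
    have h₂ := qPoch_ne_zero (mul_pow_ne_one (x := -q ^ 2) (by rwa [norm_neg]) hq₂.le) k
    simp only [Function.comp, eta2, even_two_mul, if_true, Nat.mul_div_cancel_left k two_pos,
      qPoch_neg_two_mul, qpoch_pow_four, pow_mul]
    field_simp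
  · intro n hn
    have hodd : ¬ Even n := fun ⟨k, hk⟩ => hn ⟨k, by simp only; omega⟩
    simp [eta2, hodd]

end EtaPairing

lemma prod_one_sub_zpow_neg_mul_pow_add {q : ℂ} (hq₀ : q ≠ 0) (l j : ℕ) :
    ∏ t ∈ range j, (1 - q ^ (-(t : ℤ)) * q ^ (l + j)) = ∏ t ∈ range j, (1 - q ^ (l + t + 1)) := by
  rw [← prod_range_reflect (fun t => 1 - q ^ (l + t + 1))]
  refine prod_congr rfl fun t ht => ?_
  have := mem_range.1 ht
  rw [show l + j = t + (l + (j - 1 - t) + 1) by omega, pow_add, zpow_neg, zpow_natCast,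
    inv_mul_cancel_left₀ (pow_ne_zero t hq₀)]

lemma prod_one_sub_zpow_neg_mul_pow_eq_zero {q : ℂ} (hq₀ : q ≠ 0) {n j : ℕ} (hn : n < j) :
    ∏ t ∈ range j, (1 - q ^ (-(t : ℤ)) * q ^ n) = 0 :=
  prod_eq_zero (mem_range.2 hn) (by rw [zpow_neg, zpow_natCast, inv_mul_cancel₀ (pow_ne_zero n hq₀),
    sub_self])

lemma matrixElement_eq {q z w : ℂ} (j m : ℕ) (hq : ‖q‖ < 1) (hq₀ : q ≠ 0) (hz : z ≠ 0) (l : ℕ) :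
    eta1 q l * qpoch (q ^ 2) l * (zh z ((aM q)^[j] ((kk q)^[m] (zh w (eta2 q))))) l =
      z ^ (-(j : ℤ)) * ((∏ t ∈ range j, (1 - q ^ (-(t : ℤ)) * q ^ (l + j))) *
        (qPoch (-q) q (l + j) * ((q ^ m * z * w) ^ (l + j) * eta2 q (l + j)))) := by
  have hpoch : qPoch (-q) q (l + j) = qPoch (-q) q l * ∏ t ∈ range j, (1 + q ^ (l + t + 1)) := by
    rw [qPoch_add]
    exact congrArg _ (prod_congr rfl fun t _ => by ring)
  have hsq : (∏ t ∈ range j, (1 - q ^ (l + t + 1))) * ∏ t ∈ range j, (1 + q ^ (l + t + 1)) =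
      ∏ t ∈ range j, (1 - q ^ (2 * (l + t + 1))) := by
    rw [← prod_mul_distrib]
    exact prod_congr rfl fun t _ => by ring
  have hzpow : z ^ (-(j : ℤ)) * z ^ (l + j) = z ^ l := by
    rw [pow_add, zpow_neg, zpow_natCast, mul_left_comm, inv_mul_cancel₀ (pow_ne_zero j hz), mul_one]
  simp only [zh, aM_iterate_apply, kk_iterate_apply]
  rw [eta1_mul_qpoch_sq hq, prod_one_sub_zpow_neg_mul_pow_add hq₀, hpoch, ← hsq, ← hzpow]
  ring

/-- `⟨η₁| z^h (a⁻)^j k^m w^h |η₂⟩ = z^{-j} Σ_{i=0}^j (-1)^i q^{i(i+1-2j)/2}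
binom(j,i)_q (-q^{2i+2m+1}z²w²;q²)_∞ / (q^{2i+2m}z²w²;q²)_∞`;
the pairing is `⟨m|m'⟩ = δ_{m,m'}(q²;q²)_m`. -/
theorem stmt8 (q z w : ℂ) (j m : ℕ) (hq : ‖q‖ < 1) (hq0 : q ≠ 0) (hz : z ≠ 0)
    (hzw : ‖z * w‖ < 1) :
    ∑' l : ℕ, eta1 q l * qpoch (q ^ 2) l *
        (zh z ((aM q)^[j] ((kk q)^[m] (zh w (eta2 q))))) l
    = z ^ (-(j : ℤ)) * ∑ i ∈ Finset.range (j + 1),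
        (-1 : ℂ) ^ i * q ^ (((i : ℤ) * (i + 1)) / 2 - (i : ℤ) * j) * qbinom q j i *
          (qpochInf (-(q ^ (2 * i + 2 * m + 1)) * z ^ 2 * w ^ 2) (q ^ 2) /
            qpochInf (q ^ (2 * i + 2 * m) * z ^ 2 * w ^ 2) (q ^ 2)) := by
  set F : ℕ → ℂ := fun n => z ^ (-(j : ℤ)) * ((∏ t ∈ range j, (1 - q ^ (-(t : ℤ)) * q ^ n)) *
    (qPoch (-q) q n * ((q ^ m * z * w) ^ n * eta2 q n)))
  have hterm (i : ℕ) : HasSum (fun n => qPoch (-q) q n * ((q ^ (i + m) * z * w) ^ n * eta2 q n))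
      (qpochInf (-(q ^ (2 * i + 2 * m + 1)) * z ^ 2 * w ^ 2) (q ^ 2) /
        qpochInf (q ^ (2 * i + 2 * m) * z ^ 2 * w ^ 2) (q ^ 2)) := by
    have hx : ‖q ^ (i + m) * z * w‖ < 1 := by
      rw [mul_assoc, norm_mul, norm_pow]
      exact (mul_le_of_le_one_left (norm_nonneg _) (pow_le_one₀ (norm_nonneg q) hq.le)).trans_lt hzw
    convert hasSum_eta_pairing hq hx using 3 <;> ring
  have hF : HasSum F _ := ((hasSum_sum (s := range (j + 1)) fun i _ => (hterm i).mul_left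
      ((-1 : ℂ) ^ i * q ^ (((i : ℤ) * (i + 1)) / 2 - (i : ℤ) * j) * qbinom q j i)).mul_left
      (z ^ (-(j : ℤ)))).congr_fun fun n => by
    simp only [F, prod_one_sub_zpow_neg_mul hq0 (qpoch_ne_zero hq), sum_mul, mul_sum]
    exact sum_congr rfl fun i _ => by ring
  have hvanish : ∑ n ∈ range j, F n = 0 := sum_eq_zero fun n hn => by
    simp only [F, prod_one_sub_zpow_neg_mul_pow_eq_zero hq0 (mem_range.1 hn), zero_mul, mul_zero]
  have hshift := (hasSum_nat_add_iff' j).2 hF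
  rw [hvanish, sub_zero] at hshift
  exact (hshift.congr_fun (matrixElement_eq j m hq hq0 hz)).tsum_eq
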